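/- Every P-point is a weak P-point: if W is a P-point on ℕ and (X_n)_{n∈ℕ} are non-principal ultrafilters on ℕ each distinct from W, then there exists A ∈ W such that A ∉ X_n for every n. -/

import Mathlib

/-!
Choose `C n ∈ W` with `C n ∉ X n`. Since `W` is a P-point, applying its defining property to
the map sending `a` to the first `n` with `a ∉ C n` yields `A ∈ W` almost contained in every
`C n`. If `A ∈ X n`, then `A \ C n ∈ X n`, a finite set in a non-principal ultrafilter.
-/

/-- `W` is a P-point: for every `f : α → ℕ` there is `A ∈ W` on which `f` is
finite-to-one or constant. -/
def IsPPoint {α : Type*} (W : Ultrafilter α) : Prop :=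
  ∀ f : α → ℕ, ∃ A ∈ W, (∀ k, {a ∈ A | f a = k}.Finite) ∨ (∃ c, ∀ a ∈ A, f a = c)

theorem Ultrafilter.exists_mem_notMem_of_ne {α : Type*} {X W : Ultrafilter α} (h : X ≠ W) :
    ∃ C ∈ W, C ∉ X := by
  by_contra! hle
  exact h (Ultrafilter.coe_le_coe.mp hle)

theorem IsPPoint.exists_mem_forall_sdiff_finite {α : Type*} {W : Ultrafilter α} (hW : IsPPoint W)
    (D : ℕ → Set α) (hD : ∀ n, D n ∈ W) : ∃ A ∈ W, ∀ n, (A \ D n).Finite := by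
  -- `sInf ∅ = 0`, so points lying in every `D n` are sent to `0` as well.
  set f : α → ℕ := fun a => sInf {n | a ∉ D n}
  obtain ⟨A, hAW, hfin | ⟨c, hc⟩⟩ := hW f
  · refine ⟨A, hAW, fun n => ?_⟩
    have hsub : A \ D n ⊆ ⋃ k ∈ Set.Iic n, {a ∈ A | f a = k} := fun a ha =>
      Set.mem_biUnion (Nat.sInf_le ha.2) ⟨ha.1, rfl⟩
    exact ((Set.finite_Iic n).biUnion fun k _ => hfin k).subset hsub
  · refine ⟨A ∩ D c, Filter.inter_mem hAW (hD c), fun n => ?_⟩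
    suffices A ∩ D c ⊆ D n by simp [Set.sdiff_eq_empty.2 this]
    rintro a ⟨haA, hac⟩
    by_contra han
    have hfa : a ∉ D (f a) := Nat.sInf_mem (s := {n | a ∉ D n}) ⟨n, han⟩
    rw [hc a haA] at hfa
    exact hfa hac

theorem stmt13 (W : Ultrafilter ℕ) (hW : IsPPoint W)
    (X : ℕ → Ultrafilter ℕ)
    (hXnp : ∀ n, ∀ A ∈ X n, Set.Infinite A)
    (hne : ∀ n, X n ≠ W) :
    ∃ A ∈ W, ∀ n, A ∉ X n := by
  choose C hCW hCX using fun n => Ultrafilter.exists_mem_notMem_of_ne (hne n)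
  obtain ⟨A, hAW, hAC⟩ := hW.exists_mem_forall_sdiff_finite C hCW
  exact ⟨A, hAW, fun n hAX => hXnp n _ ((Ultrafilter.sdiff_mem_iff _).2 ⟨hAX, hCX n⟩) (hAC n)⟩
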